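/- arXiv:2204.12144 — 2 statements merged into one kernel-verified Lean document; each statement's English description precedes it below -/
import Mathlib

section
/- Let d, D > 0 and let r : ℝ → ℝ be infinitely differentiable with sup_{t≥0} |r(t)| < ∞ and satisfying, for every integer i ≥ 0, sup_{t≥0} |r^{(i+1)}(t)| ≤ (2d/D²)·(i+1)·sup_{t≥0} |r^{(i)}(t)|. Define ū(x,t) = Σ_{i=0}^∞ r^{(i)}(t)·x^{2i}/(d^i·(2i)!) for x ∈ [0,D] and t ≥ 0. Then ū is well defined, is differentiable in t and twice differentiable in x, and satisfies the nominal heat conduction boundary-value problem: ū_t(x,t) = d·ū_xx(x,t) for all x ∈ [0,D] and t ≥ 0, ū(0,t) = r(t), ū_x(0,t) = 0, and ū_x(D,t) = Σ_{i=1}^∞ r^{(i)}(t)·D^{2i−1}/(d^i·(2i−1)!). -/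
open scoped ENNReal

set_option maxHeartbeats 2000000

private lemma s13_bdd (q : ℝ) : ∃ B : ℝ, ∀ i : ℕ, q ^ i / (i.factorial : ℝ) ≤ B := by
  obtain ⟨B, hB⟩ := (FloorSemiring.tendsto_pow_div_factorial_atTop (K := ℝ) q).bddAbove_range
  exact ⟨B, fun i => hB ⟨i, rfl⟩⟩

private lemma s13_summable (q : ℝ) (hq : 0 ≤ q) (m : ℕ) :
    Summable (fun i : ℕ => ((i : ℝ) + 1) ^ m * q ^ i / (i.factorial : ℝ)) := by
  obtain ⟨B, hB⟩ := s13_bdd (2 * q)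
  have h2 : Summable (fun i : ℕ => ((i : ℝ) + 1) ^ m * (1 / 2 : ℝ) ^ (i + 1)) := by
    have h0 := summable_pow_mul_geometric_of_norm_lt_one (R := ℝ) m
      (r := 1 / 2) (by rw [Real.norm_eq_abs, abs_of_pos] <;> norm_num)
    have h1 := (summable_nat_add_iff 1).2 h0
    apply h1.congr
    intro i
    push_cast
    ring
  have h3 : Summable (fun i : ℕ => B * (2 * (((i : ℝ) + 1) ^ m * (1 / 2 : ℝ) ^ (i + 1)))) :=
    (h2.mul_left 2).mul_left B
  apply Summable.of_nonneg_of_le (fun i => by positivity) (fun i => ?_) h3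
  have hqi : q ^ i = (2 * q) ^ i * (1 / 2 : ℝ) ^ i := by
    rw [← mul_pow]; congr 1; ring
  calc ((i : ℝ) + 1) ^ m * q ^ i / (i.factorial : ℝ)
      = ((2 * q) ^ i / (i.factorial : ℝ)) * (((i : ℝ) + 1) ^ m * (1 / 2 : ℝ) ^ i) := by
        rw [hqi]; ring
    _ ≤ B * (((i : ℝ) + 1) ^ m * (1 / 2 : ℝ) ^ i) :=
        mul_le_mul_of_nonneg_right (hB i) (by positivity)
    _ = B * (2 * (((i : ℝ) + 1) ^ m * (1 / 2 : ℝ) ^ (i + 1))) := by ring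

/-- Under the motion-planning condition on `r`, the flatness-based reference
trajectory `ū(x,t) = Σ_i r^{(i)}(t) x^{2i}/(dⁱ(2i)!)` is well defined (the series converges
absolutely), differentiable in `t` (within `[0,∞)`) and twice differentiable in `x`, and solves
the nominal boundary-value problem: `ū_t = d·ū_xx` on `[0,D] × [0,∞)`, `ū(0,t) = r(t)`,
`ū_x(0,t) = 0`, and `ū_x(D,t) = Σ_{i≥1} r^{(i)}(t) D^{2i−1}/(dⁱ(2i−1)!)`
(the latter series reindexed over `i : ℕ` via `i ↦ i + 1`). -/
theorem statement13 (d D : ℝ) (hd : 0 < d) (hD : 0 < D) (r : ℝ → ℝ)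
    (hr : ContDiff ℝ (⊤ : ℕ∞) r)
    (hM : (⨆ t ∈ Set.Ici (0 : ℝ), (‖r t‖₊ : ℝ≥0∞)) < ⊤)
    (hrec : ∀ i : ℕ,
      (⨆ t ∈ Set.Ici (0 : ℝ), (‖iteratedDeriv (i + 1) r t‖₊ : ℝ≥0∞)) ≤
        ENNReal.ofReal (2 * d / D ^ 2 * (i + 1)) *
          ⨆ t ∈ Set.Ici (0 : ℝ), (‖iteratedDeriv i r t‖₊ : ℝ≥0∞))
    (ubar : ℝ → ℝ → ℝ)
    (hubar : ∀ x t : ℝ, ubar x t =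
      ∑' i : ℕ, iteratedDeriv i r t * x ^ (2 * i) / (d ^ i * ((2 * i).factorial : ℝ))) :
    (∀ t ≥ (0 : ℝ), ∀ x ∈ Set.Icc (0 : ℝ) D,
      Summable fun i : ℕ =>
        |iteratedDeriv i r t * x ^ (2 * i) / (d ^ i * ((2 * i).factorial : ℝ))|) ∧
    (∀ t ≥ (0 : ℝ), ∀ x ∈ Set.Icc (0 : ℝ) D,
      DifferentiableWithinAt ℝ (fun τ => ubar x τ) (Set.Ici (0 : ℝ)) t) ∧
    (∀ t ≥ (0 : ℝ), ∀ x ∈ Set.Icc (0 : ℝ) D,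
      DifferentiableAt ℝ (fun ξ => ubar ξ t) x ∧
        DifferentiableAt ℝ (deriv fun ξ => ubar ξ t) x) ∧
    (∀ t ≥ (0 : ℝ), ∀ x ∈ Set.Icc (0 : ℝ) D,
      derivWithin (fun τ => ubar x τ) (Set.Ici (0 : ℝ)) t =
        d * deriv (deriv fun ξ => ubar ξ t) x) ∧
    (∀ t ≥ (0 : ℝ), ubar 0 t = r t) ∧
    (∀ t ≥ (0 : ℝ), deriv (fun ξ => ubar ξ t) 0 = 0) ∧
    (∀ t ≥ (0 : ℝ), deriv (fun ξ => ubar ξ t) D =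
      ∑' i : ℕ, iteratedDeriv (i + 1) r t * D ^ (2 * i + 1) /
        (d ^ (i + 1) * ((2 * i + 1).factorial : ℝ))) := by
  have hD2 : (0:ℝ) < D ^ 2 := by positivity
  set c : ℝ := 2 * d / D ^ 2 with hc_def
  have hc : 0 < c := by positivity
  set R : ℝ := D + 1 with hR_def
  have hR1 : 1 ≤ R := by simp [hR_def]; linarith
  have hR0 : 0 < R := by linarith
  set q : ℝ := 2 * R ^ 2 / D ^ 2 with hq_def
  have hq : 0 ≤ q := by positivity
  set K : ℝ := (⨆ t ∈ Set.Ici (0 : ℝ), (‖r t‖₊ : ℝ≥0∞)).toReal with hK_def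
  have hK0 : 0 ≤ K := ENNReal.toReal_nonneg
  have hsup : ∀ i : ℕ, (⨆ t ∈ Set.Ici (0 : ℝ), (‖iteratedDeriv i r t‖₊ : ℝ≥0∞)) ≤
      ENNReal.ofReal (c ^ i * (i.factorial : ℝ) * K) := by
    intro i
    induction i with
    | zero =>
      simp only [iteratedDeriv_zero, pow_zero, Nat.factorial_zero, Nat.cast_one, one_mul]
      rw [hK_def, ENNReal.ofReal_toReal hM.ne]
    | succ i ih =>
      calc (⨆ t ∈ Set.Ici (0 : ℝ), (‖iteratedDeriv (i + 1) r t‖₊ : ℝ≥0∞))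
          ≤ ENNReal.ofReal (c * (i + 1)) *
            ⨆ t ∈ Set.Ici (0 : ℝ), (‖iteratedDeriv i r t‖₊ : ℝ≥0∞) := hrec i
        _ ≤ ENNReal.ofReal (c * (i + 1)) * ENNReal.ofReal (c ^ i * (i.factorial : ℝ) * K) :=
            mul_le_mul_right ih _
        _ = ENNReal.ofReal (c ^ (i + 1) * ((i + 1).factorial : ℝ) * K) := by
            rw [← ENNReal.ofReal_mul (by positivity)]
            congr 1
            simp only [Nat.factorial_succ]
            push_cast
            ring
  have hbd : ∀ (i : ℕ) (t : ℝ), 0 ≤ t →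
      |iteratedDeriv i r t| ≤ K * (c ^ i * (i.factorial : ℝ)) := by
    intro i t ht
    have h1 : (‖iteratedDeriv i r t‖₊ : ℝ≥0∞) ≤ ENNReal.ofReal (c ^ i * (i.factorial : ℝ) * K) :=
      le_trans (le_biSup (f := fun t => (‖iteratedDeriv i r t‖₊ : ℝ≥0∞)) (Set.mem_Ici.2 ht))
        (hsup i)
    rw [show ((‖iteratedDeriv i r t‖₊ : ℝ≥0∞)) = ENNReal.ofReal ‖iteratedDeriv i r t‖ from by rw [ofReal_norm, enorm_eq_nnnorm]] at h1
    have h2 := (ENNReal.ofReal_le_ofReal_iff (by positivity)).1 h1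
    rw [Real.norm_eq_abs] at h2
    linarith [h2]
  have hdiff : ∀ i : ℕ, Differentiable ℝ (iteratedDeriv i r) := by
    intro i
    exact (hr.of_le (by exact_mod_cast le_top) : ContDiff ℝ ((i+1 : ℕ) : ℕ∞) r).differentiable_iteratedDeriv i
      (by exact_mod_cast i.lt_succ_self)
  have hhd : ∀ (j i : ℕ) (x σ : ℝ), HasDerivAt
      (fun τ => iteratedDeriv j r τ * x ^ (2 * i) / (d ^ i * ((2 * i).factorial : ℝ)))
      (iteratedDeriv (j + 1) r σ * x ^ (2 * i) / (d ^ i * ((2 * i).factorial : ℝ))) σ := by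
    intro j i x σ
    have h1 : HasDerivAt (iteratedDeriv j r) (iteratedDeriv (j + 1) r σ) σ := by
      simpa [iteratedDeriv_succ] using ((hdiff j) σ).hasDerivAt
    exact (h1.mul_const _).div_const _
  have hfrac : ∀ i : ℕ, c ^ i * (i.factorial : ℝ) / (d ^ i * ((2 * i).factorial : ℝ))
      ≤ (2 / D ^ 2) ^ i / (i.factorial : ℝ) := by
    intro i
    have h1 : ((i.factorial : ℝ)) * (i.factorial : ℝ) ≤ ((2 * i).factorial : ℝ) := by
      have := Nat.le_of_dvd (Nat.factorial_pos (i + i))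
        (Nat.factorial_mul_factorial_dvd_factorial_add i i)
      rw [← two_mul] at this
      exact_mod_cast this
    have hif : (0:ℝ) < (i.factorial : ℝ) := by exact_mod_cast i.factorial_pos
    have h2f : (0:ℝ) < ((2 * i).factorial : ℝ) := by exact_mod_cast (2 * i).factorial_pos
    rw [div_le_div_iff₀ (by positivity) (by positivity)]
    have hcd : c ^ i = (2 / D ^ 2) ^ i * d ^ i := by
      rw [← mul_pow]
      congr 1
      rw [hc_def]
      field_simp
    calc c ^ i * (i.factorial : ℝ) * (i.factorial : ℝ)
        = (2 / D ^ 2) ^ i * d ^ i * ((i.factorial : ℝ) * (i.factorial : ℝ)) := by rw [hcd]; ring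
      _ ≤ (2 / D ^ 2) ^ i * d ^ i * ((2 * i).factorial : ℝ) := by
          apply mul_le_mul_of_nonneg_left h1 (by positivity)
      _ = (2 / D ^ 2) ^ i * (d ^ i * ((2 * i).factorial : ℝ)) := by ring
  have hbase : ∀ (i e : ℕ), e ≤ 2 * i →
      R ^ e * (c ^ i * (i.factorial : ℝ) / (d ^ i * ((2 * i).factorial : ℝ)))
        ≤ q ^ i / (i.factorial : ℝ) := by
    intro i e he
    have h1 : R ^ e ≤ R ^ (2 * i) := pow_le_pow_right₀ hR1 he
    calc R ^ e * (c ^ i * (i.factorial : ℝ) / (d ^ i * ((2 * i).factorial : ℝ)))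
        ≤ R ^ (2 * i) * ((2 / D ^ 2) ^ i / (i.factorial : ℝ)) :=
          mul_le_mul h1 (hfrac i) (by positivity) (by positivity)
      _ = q ^ i / (i.factorial : ℝ) := by
          rw [hq_def, pow_mul, div_pow, div_pow, mul_pow]
          ring
  have key : ∀ (i e : ℕ) (P Q A x : ℝ), e ≤ 2 * i → 0 ≤ P → 0 ≤ Q →
      |A| ≤ Q * (c ^ i * (i.factorial : ℝ)) → |x| ≤ R →
      |A * (P * x ^ e) / (d ^ i * ((2 * i).factorial : ℝ))|
        ≤ P * (Q * (q ^ i / (i.factorial : ℝ))) := by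
    intro i e P Q A x he hP hQ hA hx
    have hC : (0:ℝ) < d ^ i * ((2 * i).factorial : ℝ) := by positivity
    rw [abs_div, abs_of_pos hC, abs_mul, abs_mul, abs_pow, abs_of_nonneg hP]
    calc |A| * (P * |x| ^ e) / (d ^ i * ((2 * i).factorial : ℝ))
        ≤ (Q * (c ^ i * (i.factorial : ℝ))) * (P * R ^ e) / (d ^ i * ((2 * i).factorial : ℝ)) := by
          gcongr <;> first
            | exact hA
            | exact pow_le_pow_left (abs_nonneg x) hx e
      _ = P * (Q * (R ^ e * (c ^ i * (i.factorial : ℝ) / (d ^ i * ((2 * i).factorial : ℝ))))) := by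
          field_simp
      _ ≤ P * (Q * (q ^ i / (i.factorial : ℝ))) := by
          have := hbase i e he
          gcongr
  have hW : ∀ (C : ℝ) (m : ℕ),
      Summable (fun i : ℕ => C * (((i:ℝ)+1)^m * q ^ i / (i.factorial : ℝ))) :=
    fun C m => (s13_summable q hq m).mul_left C
  -- pointwise bounds on terms and their derivatives
  have hFbd : ∀ (t x : ℝ), 0 ≤ t → |x| ≤ R → ∀ i : ℕ,
      |iteratedDeriv i r t * x ^ (2*i) / (d^i * ((2*i).factorial : ℝ))|
        ≤ K * (((i:ℝ)+1)^0 * q^i / (i.factorial : ℝ)) := by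
    intro t x ht hx i
    have h := key i (2*i) 1 K (iteratedDeriv i r t) x le_rfl zero_le_one hK0 (hbd i t ht) hx
    simp only [one_mul] at h
    exact h.trans_eq (by ring)
  have hF1bd : ∀ (t x : ℝ), 0 ≤ t → |x| ≤ R → ∀ i : ℕ,
      |iteratedDeriv i r t * (((2*i:ℕ):ℝ) * x^(2*i-1)) / (d^i * ((2*i).factorial : ℝ))|
        ≤ (2*K) * (((i:ℝ)+1)^1 * q^i / (i.factorial : ℝ)) := by
    intro t x ht hx i
    have h := key i (2*i-1) ((2*i:ℕ):ℝ) K (iteratedDeriv i r t) x (Nat.sub_le _ _)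
      (by positivity) hK0 (hbd i t ht) hx
    refine h.trans ?_
    have h2 : ((2*i:ℕ):ℝ) ≤ 2*((i:ℝ)+1) := by push_cast; linarith
    calc ((2*i:ℕ):ℝ) * (K * (q^i / (i.factorial : ℝ)))
        ≤ (2*((i:ℝ)+1)) * (K * (q^i / (i.factorial : ℝ))) :=
          mul_le_mul_of_nonneg_right h2 (by positivity)
      _ = (2*K) * (((i:ℝ)+1)^1 * q^i / (i.factorial : ℝ)) := by ring
  have hF2bd : ∀ (t x : ℝ), 0 ≤ t → |x| ≤ R → ∀ i : ℕ,
      |iteratedDeriv i r t * (((2*i:ℕ):ℝ) * (((2*i-1:ℕ):ℝ) * x^(2*i-2))) / (d^i * ((2*i).factorial : ℝ))|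
        ≤ (4*K) * (((i:ℝ)+1)^2 * q^i / (i.factorial : ℝ)) := by
    intro t x ht hx i
    have hshape : iteratedDeriv i r t * (((2*i:ℕ):ℝ) * (((2*i-1:ℕ):ℝ) * x^(2*i-2))) / (d^i * ((2*i).factorial : ℝ))
        = iteratedDeriv i r t * ((((2*i:ℕ):ℝ) * ((2*i-1:ℕ):ℝ)) * x^(2*i-2)) / (d^i * ((2*i).factorial : ℝ)) := by
      ring
    rw [hshape]
    have h := key i (2*i-2) (((2*i:ℕ):ℝ) * ((2*i-1:ℕ):ℝ)) K (iteratedDeriv i r t) x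
      (Nat.sub_le _ _) (by positivity) hK0 (hbd i t ht) hx
    refine h.trans ?_
    have h2 : ((2*i:ℕ):ℝ) * ((2*i-1:ℕ):ℝ) ≤ (2*((i:ℝ)+1)) * (2*((i:ℝ)+1)) := by
      have ha : ((2*i:ℕ):ℝ) ≤ 2*((i:ℝ)+1) := by push_cast; linarith
      have hb : ((2*i-1:ℕ):ℝ) ≤ 2*((i:ℝ)+1) := by
        have : ((2*i-1:ℕ):ℝ) ≤ ((2*i:ℕ):ℝ) := by exact_mod_cast Nat.sub_le _ _
        linarith
      have hpos : (0:ℝ) ≤ ((2*i:ℕ):ℝ) := by positivity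
      nlinarith [Nat.cast_nonneg (α := ℝ) (2*i-1)]
    calc (((2*i:ℕ):ℝ) * ((2*i-1:ℕ):ℝ)) * (K * (q^i / (i.factorial : ℝ)))
        ≤ ((2*((i:ℝ)+1)) * (2*((i:ℝ)+1))) * (K * (q^i / (i.factorial : ℝ))) :=
          mul_le_mul_of_nonneg_right h2 (by positivity)
      _ = (4*K) * (((i:ℝ)+1)^2 * q^i / (i.factorial : ℝ)) := by ring
  have hH1bd : ∀ (τ x : ℝ), 0 ≤ τ → |x| ≤ R → ∀ i : ℕ,
      |iteratedDeriv (i+1) r τ * x^(2*i) / (d^i * ((2*i).factorial : ℝ))|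
        ≤ (K*c) * (((i:ℝ)+1)^1 * q^i / (i.factorial : ℝ)) := by
    intro τ x hτ hx i
    have hA : |iteratedDeriv (i+1) r τ| ≤ (K*(c*((i:ℝ)+1))) * (c^i * (i.factorial : ℝ)) :=
      (hbd (i+1) τ hτ).trans_eq (by simp only [Nat.factorial_succ]; push_cast; ring)
    have h := key i (2*i) 1 (K*(c*((i:ℝ)+1))) (iteratedDeriv (i+1) r τ) x le_rfl zero_le_one
      (by positivity) hA hx
    simp only [one_mul] at h
    exact h.trans_eq (by ring)
  have hH2bd : ∀ (σ x : ℝ), 0 ≤ σ → |x| ≤ R → ∀ i : ℕ,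
      |iteratedDeriv (i+2) r σ * x^(2*i) / (d^i * ((2*i).factorial : ℝ))|
        ≤ (4*(K*c^2)) * (((i:ℝ)+1)^2 * q^i / (i.factorial : ℝ)) := by
    intro σ x hσ hx i
    have hA : |iteratedDeriv (i+2) r σ| ≤ (K*(c^2*(((i:ℝ)+1)*((i:ℝ)+2)))) * (c^i * (i.factorial : ℝ)) :=
      (hbd (i+2) σ hσ).trans_eq (by simp only [Nat.factorial_succ]; push_cast; ring)
    have h := key i (2*i) 1 (K*(c^2*(((i:ℝ)+1)*((i:ℝ)+2)))) (iteratedDeriv (i+2) r σ) x le_rfl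
      zero_le_one (by positivity) hA hx
    simp only [one_mul] at h
    refine h.trans ?_
    have hw : (0:ℝ) ≤ q^i / (i.factorial : ℝ) := by positivity
    have hQQ : K*(c^2*(((i:ℝ)+1)*((i:ℝ)+2))) ≤ (4*(K*c^2))*(((i:ℝ)+1)^2) := by
      nlinarith [mul_nonneg (mul_nonneg (mul_nonneg hK0 (sq_nonneg c))
        (by positivity : (0:ℝ) ≤ (i:ℝ)+1)) (by positivity : (0:ℝ) ≤ 3*(i:ℝ)+2)]
    calc K*(c^2*(((i:ℝ)+1)*((i:ℝ)+2))) * (q^i / (i.factorial : ℝ))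
        ≤ ((4*(K*c^2))*(((i:ℝ)+1)^2)) * (q^i / (i.factorial : ℝ)) :=
          mul_le_mul_of_nonneg_right hQQ hw
      _ = (4*(K*c^2)) * (((i:ℝ)+1)^2 * q^i / (i.factorial : ℝ)) := by ring
  -- summability of the series at x = 0
  have hsumF0 : ∀ t : ℝ, Summable (fun i : ℕ =>
      iteratedDeriv i r t * (0:ℝ) ^ (2*i) / (d^i * ((2*i).factorial : ℝ))) := by
    intro t
    apply summable_of_ne_finset_zero (s := {0})
    intro i hi
    simp only [Finset.mem_singleton] at hi
    rw [zero_pow (by omega), mul_zero, zero_div]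
  have hF1zero : ∀ (t : ℝ) (i : ℕ),
      iteratedDeriv i r t * (((2*i:ℕ):ℝ) * (0:ℝ)^(2*i-1)) / (d^i * ((2*i).factorial : ℝ)) = 0 := by
    intro t i
    cases i with
    | zero => norm_num
    | succ n => rw [zero_pow (by omega), mul_zero, mul_zero, zero_div]
  have hIoo : ∀ x ∈ Set.Icc (0:ℝ) D, x ∈ Set.Ioo (-R) R := by
    intro x hx
    exact ⟨by simp only [hR_def]; linarith [hx.1], by simp only [hR_def]; linarith [hx.2]⟩
  have hxRle : ∀ x ∈ Set.Ioo (-R) R, |x| ≤ R := fun x hx => (abs_lt.2 ⟨hx.1, hx.2⟩).le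
  have hIccR : ∀ x ∈ Set.Icc (0:ℝ) D, |x| ≤ R := by
    intro x hx
    rw [abs_of_nonneg hx.1]
    simp only [hR_def]; linarith [hx.2]
  have h0mem : (0:ℝ) ∈ Set.Ioo (-R) R := ⟨by linarith, hR0⟩
  -- first derivative in x of the series
  have Hd1 : ∀ t : ℝ, 0 ≤ t → ∀ x ∈ Set.Ioo (-R) R, HasDerivAt (fun ξ => ubar ξ t)
      (∑' i : ℕ, iteratedDeriv i r t * (((2*i:ℕ):ℝ) * x^(2*i-1)) / (d^i * ((2*i).factorial : ℝ))) x := by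
    intro t ht x hx
    have hfun : (fun ξ => ubar ξ t)
        = fun ξ => ∑' i : ℕ, iteratedDeriv i r t * ξ^(2*i) / (d^i * ((2*i).factorial : ℝ)) :=
      funext fun ξ => hubar ξ t
    rw [hfun]
    refine hasDerivAt_tsum_of_isPreconnected
      (g := fun (i : ℕ) (ξ : ℝ) => iteratedDeriv i r t * ξ^(2*i) / (d^i * ((2*i).factorial : ℝ)))
      (g' := fun (i : ℕ) (y : ℝ) => iteratedDeriv i r t * (((2*i:ℕ):ℝ) * y^(2*i-1)) / (d^i * ((2*i).factorial : ℝ)))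
      (hW (2*K) 1) isOpen_Ioo
      isPreconnected_Ioo (fun i y hy => ?_) (fun i y hy => ?_) h0mem (hsumF0 t) hx
    · exact ((hasDerivAt_pow (2*i) y).const_mul (iteratedDeriv i r t)).div_const _
    · rw [Real.norm_eq_abs]
      exact hF1bd t y ht (hxRle y hy) i
  -- second derivative in x of the series
  have Hd2 : ∀ t : ℝ, 0 ≤ t → ∀ x ∈ Set.Ioo (-R) R, HasDerivAt
      (fun ξ => ∑' i : ℕ, iteratedDeriv i r t * (((2*i:ℕ):ℝ) * ξ^(2*i-1)) / (d^i * ((2*i).factorial : ℝ)))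
      (∑' i : ℕ, iteratedDeriv i r t * (((2*i:ℕ):ℝ) * (((2*i-1:ℕ):ℝ) * x^(2*i-2))) / (d^i * ((2*i).factorial : ℝ))) x := by
    intro t ht x hx
    refine hasDerivAt_tsum_of_isPreconnected
      (g := fun (i : ℕ) (ξ : ℝ) => iteratedDeriv i r t * (((2*i:ℕ):ℝ) * ξ^(2*i-1)) / (d^i * ((2*i).factorial : ℝ)))
      (g' := fun (i : ℕ) (y : ℝ) => iteratedDeriv i r t * (((2*i:ℕ):ℝ) * (((2*i-1:ℕ):ℝ) * y^(2*i-2))) / (d^i * ((2*i).factorial : ℝ)))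
      (hW (4*K) 2) isOpen_Ioo
      isPreconnected_Ioo (fun i y hy => ?_) (fun i y hy => ?_) h0mem
      (summable_zero.congr (fun i => (hF1zero t i).symm)) hx
    · have h := (((hasDerivAt_pow (2*i-1) y).const_mul ((2*i:ℕ):ℝ)).const_mul
        (iteratedDeriv i r t)).div_const (d^i * ((2*i).factorial : ℝ))
      rw [show 2*i-1-1 = 2*i-2 from by omega] at h
      exact h
    · rw [Real.norm_eq_abs]
      exact hF2bd t y ht (hxRle y hy) i
  -- derivative in t (within [0, ∞)) of the series
  have Hwithin : ∀ t : ℝ, 0 ≤ t → ∀ x ∈ Set.Icc (0:ℝ) D,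
      HasDerivWithinAt (fun τ => ubar x τ)
        (∑' i : ℕ, iteratedDeriv (i+1) r t * x^(2*i) / (d^i * ((2*i).factorial : ℝ)))
        (Set.Ici (0:ℝ)) t := by
    intro t ht x hx
    have hxR' : |x| ≤ R := hIccR x hx
    have hfun : (fun τ => ubar x τ)
        = fun τ => ∑' i : ℕ, iteratedDeriv i r τ * x^(2*i) / (d^i * ((2*i).factorial : ℝ)) :=
      funext fun τ => hubar x τ
    rw [hfun]
    have hBsum : Summable (fun i : ℕ =>
        (4*(K*c^2)) * (((i:ℝ)+1)^2 * q^i / (i.factorial : ℝ))) := hW _ 2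
    have hB0 : ∀ i : ℕ, 0 ≤ (4*(K*c^2)) * (((i:ℝ)+1)^2 * q^i / (i.factorial : ℝ)) :=
      fun i => by positivity
    have hlip : ∀ (i : ℕ) (σ σ' : ℝ), 0 ≤ σ → 0 ≤ σ' →
        |iteratedDeriv (i+1) r σ * x^(2*i) / (d^i * ((2*i).factorial : ℝ))
          - iteratedDeriv (i+1) r σ' * x^(2*i) / (d^i * ((2*i).factorial : ℝ))|
        ≤ (4*(K*c^2)) * (((i:ℝ)+1)^2 * q^i / (i.factorial : ℝ)) * |σ - σ'| := by
      intro i σ σ' hσ hσ'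
      have h := Convex.norm_image_sub_le_of_norm_hasDerivWithin_le
        (f := fun τ => iteratedDeriv (i+1) r τ * x^(2*i) / (d^i * ((2*i).factorial : ℝ)))
        (f' := fun σ => iteratedDeriv (i+1+1) r σ * x^(2*i) / (d^i * ((2*i).factorial : ℝ)))
        (s := Set.Ici (0:ℝ)) (C := (4*(K*c^2)) * (((i:ℝ)+1)^2 * q^i / (i.factorial : ℝ)))
        (fun y _ => (hhd (i+1) i x y).hasDerivWithinAt)
        (fun y hy => by rw [Real.norm_eq_abs]; exact hH2bd y x hy hxR' i)
        (convex_Ici 0) (Set.mem_Ici.2 hσ') (Set.mem_Ici.2 hσ)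
      rw [Real.norm_eq_abs, Real.norm_eq_abs] at h
      exact h
    have htay : ∀ (τ : ℝ), 0 ≤ τ → ∀ i : ℕ,
        |iteratedDeriv i r τ * x^(2*i) / (d^i * ((2*i).factorial : ℝ))
          - iteratedDeriv i r t * x^(2*i) / (d^i * ((2*i).factorial : ℝ))
          - (τ - t) * (iteratedDeriv (i+1) r t * x^(2*i) / (d^i * ((2*i).factorial : ℝ)))|
        ≤ (4*(K*c^2)) * (((i:ℝ)+1)^2 * q^i / (i.factorial : ℝ)) * |τ - t|^2 := by
      intro τ hτ i
      have hsub : Set.uIcc t τ ⊆ Set.Ici (0:ℝ) := by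
        intro σ hσ
        rcases Set.mem_uIcc.1 hσ with ⟨h1, h2⟩ | ⟨h1, h2⟩ <;> exact Set.mem_Ici.2 (by linarith)
      have hdist : ∀ σ ∈ Set.uIcc t τ, |σ - t| ≤ |τ - t| := by
        intro σ hσ
        rcases Set.mem_uIcc.1 hσ with ⟨h1, h2⟩ | ⟨h1, h2⟩
        · rw [abs_of_nonneg (by linarith), abs_of_nonneg (by linarith)]; linarith
        · rw [abs_of_nonpos (by linarith), abs_of_nonpos (by linarith)]; linarith
      have h := Convex.norm_image_sub_le_of_norm_hasDerivWithin_le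
        (f := fun σ => iteratedDeriv i r σ * x^(2*i) / (d^i * ((2*i).factorial : ℝ))
          - iteratedDeriv (i+1) r t * x^(2*i) / (d^i * ((2*i).factorial : ℝ)) * σ)
        (f' := fun σ => iteratedDeriv (i+1) r σ * x^(2*i) / (d^i * ((2*i).factorial : ℝ))
          - iteratedDeriv (i+1) r t * x^(2*i) / (d^i * ((2*i).factorial : ℝ)))
        (s := Set.uIcc t τ)
        (C := (4*(K*c^2)) * (((i:ℝ)+1)^2 * q^i / (i.factorial : ℝ)) * |τ - t|)
        (fun σ _ => by
          have hlin : HasDerivAt (fun σ : ℝ =>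
              iteratedDeriv (i+1) r t * x^(2*i) / (d^i * ((2*i).factorial : ℝ)) * σ)
              (iteratedDeriv (i+1) r t * x^(2*i) / (d^i * ((2*i).factorial : ℝ))) σ := by
            simpa using (hasDerivAt_id σ).const_mul
              (iteratedDeriv (i+1) r t * x^(2*i) / (d^i * ((2*i).factorial : ℝ)))
          exact ((hhd i i x σ).sub hlin).hasDerivWithinAt)
        (fun σ hσ => by
          rw [Real.norm_eq_abs]
          exact le_trans (hlip i σ t (hsub hσ) ht)
            (mul_le_mul_of_nonneg_left (hdist σ hσ) (hB0 i)))
        (convex_uIcc t τ) Set.left_mem_uIcc Set.right_mem_uIcc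
      rw [Real.norm_eq_abs, Real.norm_eq_abs] at h
      have harg : (iteratedDeriv i r τ * x^(2*i) / (d^i * ((2*i).factorial : ℝ))
            - iteratedDeriv (i+1) r t * x^(2*i) / (d^i * ((2*i).factorial : ℝ)) * τ)
          - (iteratedDeriv i r t * x^(2*i) / (d^i * ((2*i).factorial : ℝ))
            - iteratedDeriv (i+1) r t * x^(2*i) / (d^i * ((2*i).factorial : ℝ)) * t)
          = iteratedDeriv i r τ * x^(2*i) / (d^i * ((2*i).factorial : ℝ))
            - iteratedDeriv i r t * x^(2*i) / (d^i * ((2*i).factorial : ℝ))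
            - (τ - t) * (iteratedDeriv (i+1) r t * x^(2*i) / (d^i * ((2*i).factorial : ℝ))) := by
        ring
      rw [harg] at h
      exact h.trans_eq (by ring)
    have hst : Summable (fun i : ℕ =>
        iteratedDeriv i r t * x^(2*i) / (d^i * ((2*i).factorial : ℝ))) :=
      Summable.of_norm_bounded (hW K 0)
        (fun i => by rw [Real.norm_eq_abs]; exact hFbd t x ht hxR' i)
    have hs1 : Summable (fun i : ℕ =>
        iteratedDeriv (i+1) r t * x^(2*i) / (d^i * ((2*i).factorial : ℝ))) :=
      Summable.of_norm_bounded (hW (K*c) 1)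
        (fun i => by rw [Real.norm_eq_abs]; exact hH1bd t x ht hxR' i)
    rw [hasDerivWithinAt_iff_isLittleO]
    refine Asymptotics.IsBigO.trans_isLittleO ?_
      ((Asymptotics.isLittleO_pow_sub_sub t (by norm_num : 1 < 2)).mono nhdsWithin_le_nhds)
    rw [Asymptotics.isBigO_iff]
    refine ⟨∑' i : ℕ, (4*(K*c^2)) * (((i:ℝ)+1)^2 * q^i / (i.factorial : ℝ)),
      eventually_mem_nhdsWithin.mono fun τ hτ => ?_⟩
    have hτ0 : (0:ℝ) ≤ τ := hτ
    have hsτ : Summable (fun i : ℕ =>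
        iteratedDeriv i r τ * x^(2*i) / (d^i * ((2*i).factorial : ℝ))) :=
      Summable.of_norm_bounded (hW K 0)
        (fun i => by rw [Real.norm_eq_abs]; exact hFbd τ x hτ0 hxR' i)
    have hnorm : Summable (fun i : ℕ =>
        ‖iteratedDeriv i r τ * x^(2*i) / (d^i * ((2*i).factorial : ℝ))
          - iteratedDeriv i r t * x^(2*i) / (d^i * ((2*i).factorial : ℝ))
          - (τ - t) * (iteratedDeriv (i+1) r t * x^(2*i) / (d^i * ((2*i).factorial : ℝ)))‖) :=
      Summable.of_nonneg_of_le (fun i => norm_nonneg _)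
        (fun i => by rw [Real.norm_eq_abs]; exact htay τ hτ0 i) (hBsum.mul_right _)
    have hrw : (∑' i : ℕ, iteratedDeriv i r τ * x^(2*i) / (d^i * ((2*i).factorial : ℝ)))
          - (∑' i : ℕ, iteratedDeriv i r t * x^(2*i) / (d^i * ((2*i).factorial : ℝ)))
          - (τ - t) • (∑' i : ℕ, iteratedDeriv (i+1) r t * x^(2*i) / (d^i * ((2*i).factorial : ℝ)))
        = ∑' i : ℕ, (iteratedDeriv i r τ * x^(2*i) / (d^i * ((2*i).factorial : ℝ))
          - iteratedDeriv i r t * x^(2*i) / (d^i * ((2*i).factorial : ℝ))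
          - (τ - t) * (iteratedDeriv (i+1) r t * x^(2*i) / (d^i * ((2*i).factorial : ℝ)))) := by
      rw [smul_eq_mul, ← tsum_mul_left, ← Summable.tsum_sub hsτ hst,
        ← Summable.tsum_sub (hsτ.sub hst) (hs1.mul_left (τ - t))]
    simp only [hrw]
    calc ‖∑' i : ℕ, (iteratedDeriv i r τ * x^(2*i) / (d^i * ((2*i).factorial : ℝ))
          - iteratedDeriv i r t * x^(2*i) / (d^i * ((2*i).factorial : ℝ))
          - (τ - t) * (iteratedDeriv (i+1) r t * x^(2*i) / (d^i * ((2*i).factorial : ℝ))))‖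
        ≤ ∑' i : ℕ, ‖iteratedDeriv i r τ * x^(2*i) / (d^i * ((2*i).factorial : ℝ))
          - iteratedDeriv i r t * x^(2*i) / (d^i * ((2*i).factorial : ℝ))
          - (τ - t) * (iteratedDeriv (i+1) r t * x^(2*i) / (d^i * ((2*i).factorial : ℝ)))‖ :=
          norm_tsum_le_tsum_norm hnorm
      _ ≤ ∑' i : ℕ, (4*(K*c^2)) * (((i:ℝ)+1)^2 * q^i / (i.factorial : ℝ)) * |τ - t|^2 :=
          Summable.tsum_le_tsum (fun i => by rw [Real.norm_eq_abs]; exact htay τ hτ0 i) hnorm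
            (hBsum.mul_right _)
      _ = (∑' i : ℕ, (4*(K*c^2)) * (((i:ℝ)+1)^2 * q^i / (i.factorial : ℝ))) * |τ - t|^2 :=
          tsum_mul_right
      _ = (∑' i : ℕ, (4*(K*c^2)) * (((i:ℝ)+1)^2 * q^i / (i.factorial : ℝ))) * ‖‖τ - t‖^2‖ := by
          rw [Real.norm_eq_abs, Real.norm_eq_abs, abs_of_nonneg (by positivity : (0:ℝ) ≤ |τ - t|^2)]
  -- assemble all conclusions
  refine ⟨?_, ?_, ?_, ?_, ?_, ?_, ?_⟩
  · intro t ht x hx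
    exact Summable.of_nonneg_of_le (fun i => abs_nonneg _)
      (fun i => hFbd t x ht (hIccR x hx) i) (hW K 0)
  · intro t ht x hx
    exact (Hwithin t ht x hx).differentiableWithinAt
  · intro t ht x hx
    have hxI := hIoo x hx
    refine ⟨(Hd1 t ht x hxI).differentiableAt, ?_⟩
    have heq : (deriv fun ξ => ubar ξ t) =ᶠ[nhds x]
        (fun ξ => ∑' i : ℕ, iteratedDeriv i r t * (((2*i:ℕ):ℝ) * ξ^(2*i-1)) / (d^i * ((2*i).factorial : ℝ))) := by
      filter_upwards [isOpen_Ioo.mem_nhds hxI] with y hy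
      exact (Hd1 t ht y hy).deriv
    exact (Hd2 t ht x hxI).differentiableAt.congr_of_eventuallyEq heq
  · intro t ht x hx
    have hxI := hIoo x hx
    have heq : (deriv fun ξ => ubar ξ t) =ᶠ[nhds x]
        (fun ξ => ∑' i : ℕ, iteratedDeriv i r t * (((2*i:ℕ):ℝ) * ξ^(2*i-1)) / (d^i * ((2*i).factorial : ℝ))) := by
      filter_upwards [isOpen_Ioo.mem_nhds hxI] with y hy
      exact (Hd1 t ht y hy).deriv
    have h2d : deriv (deriv fun ξ => ubar ξ t) x
        = ∑' i : ℕ, iteratedDeriv i r t * (((2*i:ℕ):ℝ) * (((2*i-1:ℕ):ℝ) * x^(2*i-2))) / (d^i * ((2*i).factorial : ℝ)) := by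
      rw [heq.deriv_eq]
      exact (Hd2 t ht x hxI).deriv
    have hdw : derivWithin (fun τ => ubar x τ) (Set.Ici 0) t
        = ∑' i : ℕ, iteratedDeriv (i+1) r t * x^(2*i) / (d^i * ((2*i).factorial : ℝ)) :=
      (Hwithin t ht x hx).derivWithin (uniqueDiffOn_Ici 0 t (Set.mem_Ici.2 ht))
    rw [hdw, h2d]
    have hs2 : Summable (fun i : ℕ =>
        iteratedDeriv i r t * (((2*i:ℕ):ℝ) * (((2*i-1:ℕ):ℝ) * x^(2*i-2))) / (d^i * ((2*i).factorial : ℝ))) :=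
      Summable.of_norm_bounded (hW (4*K) 2)
        (fun i => by rw [Real.norm_eq_abs]; exact hF2bd t x ht (hIccR x hx) i)
    rw [Summable.tsum_eq_zero_add hs2]
    have h00 : iteratedDeriv 0 r t * (((2*0:ℕ):ℝ) * (((2*0-1:ℕ):ℝ) * x^(2*0-2))) / (d^0 * ((2*0).factorial : ℝ)) = 0 := by
      norm_num
    rw [h00, zero_add, ← tsum_mul_left]
    apply tsum_congr
    intro i
    have e1 : 2*(i+1) = 2*i+1+1 := by ring
    rw [e1]
    simp only [show 2*i+1+1-1 = 2*i+1 from by omega, show 2*i+1+1-2 = 2*i from by omega,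
      Nat.factorial_succ (2*i+1), Nat.factorial_succ (2*i)]
    have hfz : ((2*i).factorial : ℝ) ≠ 0 := by
      exact_mod_cast (2*i).factorial_ne_zero
    have hdz : d ≠ 0 := ne_of_gt hd
    rw [pow_succ]
    push_cast
    field_simp
  · intro t _
    rw [hubar 0 t, tsum_eq_single 0 (fun i hi => by
      rw [zero_pow (by omega : 2*i ≠ 0), mul_zero, zero_div])]
    norm_num
  · intro t ht
    rw [(Hd1 t ht 0 h0mem).deriv]
    exact (tsum_congr (hF1zero t)).trans tsum_zero
  · intro t ht
    have hDmem : D ∈ Set.Ioo (-R) R := hIoo D ⟨le_of_lt hD, le_refl D⟩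
    rw [(Hd1 t ht D hDmem).deriv]
    have hs1D : Summable (fun i : ℕ =>
        iteratedDeriv i r t * (((2*i:ℕ):ℝ) * D^(2*i-1)) / (d^i * ((2*i).factorial : ℝ))) :=
      Summable.of_norm_bounded (hW (2*K) 1)
        (fun i => by rw [Real.norm_eq_abs]; exact hF1bd t D ht (hxRle D hDmem) i)
    rw [Summable.tsum_eq_zero_add hs1D]
    have h00 : iteratedDeriv 0 r t * (((2*0:ℕ):ℝ) * D^(2*0-1)) / (d^0 * ((2*0).factorial : ℝ)) = 0 := by
      norm_num
    rw [h00, zero_add]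
    apply tsum_congr
    intro i
    have e1 : 2*(i+1) = 2*i+1+1 := by ring
    rw [e1]
    simp only [show 2*i+1+1-1 = 2*i+1 from by omega, Nat.factorial_succ (2*i+1)]
    have hfz : ((2*i+1).factorial : ℝ) ≠ 0 := by
      exact_mod_cast (2*i+1).factorial_ne_zero
    have hdz : d ≠ 0 := ne_of_gt hd
    push_cast
    field_simp
end

section
/- Let d, ω > 0 and A ∈ ℝ, and let r : ℝ → ℝ be given by r(t) = A·sin(ω t). Then for all x ∈ ℝ and t ∈ ℝ, the series Σ_{i=0}^∞ r^{(i)}(t)·x^{2i}/(d^i·(2i)!) converges absolutely and its sum equals (A/2)·e^{x·√(ω/(2d))}·sin( ω t + x·√(ω/(2d)) ) + (A/2)·e^{−x·√(ω/(2d))}·sin( ω t − x·√(ω/(2d)) ). -/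
/-!
Since `r⁽ⁱ⁾(t) = A ωⁱ sin(ωt + iπ/2) = Im (A e^{iωt} (iω)ⁱ)`, the series is the imaginary part
of `A e^{iωt} Σ (w²)ⁱ/(2i)! = A e^{iωt} cosh w` for `w = c(1 + i)`, `c = x √(ω/(2d))`, because
`w² = 2ic² = iωx²/d`. Expanding `cosh w = (e^w + e^{-w})/2` gives the closed form. Absolute
convergence is free: a summable real series is absolutely summable.
-/

open Real

theorem Real.iteratedDeriv_sin (n : ℕ) :
    iteratedDeriv n sin = fun t => sin (t + n * (π / 2)) := by
  induction n with
  | zero => simp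
  | succ n ih =>
    funext t
    rw [iteratedDeriv_succ, ih, ((hasDerivAt_id' t).add_const _).sin.deriv]
    push_cast
    rw [add_one_mul, ← add_assoc, sin_add_pi_div_two, mul_one]

theorem iteratedDeriv_const_mul_sin_const_mul (A ω : ℝ) (n : ℕ) (t : ℝ) :
    iteratedDeriv n (fun s => A * sin (ω * s)) t = A * ω ^ n * sin (ω * t + n * (π / 2)) := by
  rw [iteratedDeriv_const_mul_field, iteratedDeriv_comp_const_mul contDiff_sin, iteratedDeriv_sin,
    mul_assoc]

namespace Complex

theorem I_pow_eq_exp (n : ℕ) : I ^ n = exp (↑(n * (π / 2)) * I) := by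
  conv_lhs => rw [← exp_pi_div_two_mul_I]
  rw [← exp_nat_mul]
  push_cast
  ring_nf

theorem im_exp_mul_I_mul_cosh (θ c : ℝ) :
    (exp (θ * I) * cosh (c + c * I)).im =
      (Real.exp c * Real.sin (θ + c) + Real.exp (-c) * Real.sin (θ - c)) / 2 := by
  have hplus : θ * I + (c + c * I) = c + ↑(θ + c) * I := by push_cast; ring
  have hminus : θ * I + -(c + c * I) = ↑(-c) + ↑(θ - c) * I := by push_cast; ring
  rw [cosh, mul_div_assoc', mul_add, ← exp_add, ← exp_add, hplus, hminus, exp_add, exp_add,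
    ← ofReal_exp, ← ofReal_exp, div_ofNat_im, add_im, im_ofReal_mul, im_ofReal_mul,
    exp_ofReal_mul_I_im, exp_ofReal_mul_I_im]

end Complex

theorem hasSum_sin_add_mul_pi_div_two_mul_pow_div_factorial (θ c : ℝ) :
    HasSum (fun n : ℕ => sin (θ + n * (π / 2)) * (2 * c ^ 2) ^ n / (2 * n).factorial)
      ((exp c * sin (θ + c) + exp (-c) * sin (θ - c)) / 2) := by
  set w : ℂ := c + c * Complex.I
  have hw : w ^ 2 = ((2 * c ^ 2 : ℝ) : ℂ) * Complex.I := by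
    push_cast
    linear_combination (c : ℂ) ^ 2 * Complex.I_sq
  have hterm (n : ℕ) : Complex.exp (θ * Complex.I) * (w ^ (2 * n) / (2 * n).factorial) =
      ((2 * c ^ 2) ^ n / (2 * n).factorial : ℝ) *
        Complex.exp (↑(θ + n * (π / 2)) * Complex.I) := by
    rw [pow_mul, hw, mul_pow, Complex.I_pow_eq_exp, Complex.ofReal_add, add_mul, Complex.exp_add]
    push_cast
    ring
  rw [← Complex.im_exp_mul_I_mul_cosh]
  refine (((Complex.hasSum_cosh w).mul_left _).mapL Complex.imCLM).congr_fun fun n => ?_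
  rw [Complex.imCLM_apply, hterm, Complex.im_ofReal_mul, Complex.exp_ofReal_mul_I_im]
  ring

/-- For the sinusoidal reference `r(t) = A·sin(ωt)` (`d, ω > 0`), the
flatness-based series `Σ_i r^{(i)}(t) x^{2i}/(dⁱ(2i)!)` converges absolutely for all
`x, t ∈ ℝ` and sums to the analytic reference profile
`(A/2)·e^{x√(ω/(2d))}·sin(ωt + x√(ω/(2d))) + (A/2)·e^{−x√(ω/(2d))}·sin(ωt − x√(ω/(2d)))`. -/
theorem statement15 (d ω A : ℝ) (hd : 0 < d) (hω : 0 < ω) :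
    ∀ x t : ℝ,
      (Summable fun i : ℕ =>
        |iteratedDeriv i (fun s => A * Real.sin (ω * s)) t * x ^ (2 * i) /
          (d ^ i * ((2 * i).factorial : ℝ))|) ∧
      ∑' i : ℕ, iteratedDeriv i (fun s => A * Real.sin (ω * s)) t * x ^ (2 * i) /
          (d ^ i * ((2 * i).factorial : ℝ)) =
        A / 2 * Real.exp (x * Real.sqrt (ω / (2 * d))) *
            Real.sin (ω * t + x * Real.sqrt (ω / (2 * d))) +
          A / 2 * Real.exp (-(x * Real.sqrt (ω / (2 * d)))) *
            Real.sin (ω * t - x * Real.sqrt (ω / (2 * d))) := by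
  intro x t
  set c := x * sqrt (ω / (2 * d))
  have hc : 2 * c ^ 2 = ω * x ^ 2 / d := by
    rw [mul_pow, sq_sqrt (by positivity)]
    field_simp
  have hsum := (hasSum_sin_add_mul_pi_div_two_mul_pow_div_factorial (ω * t) c).mul_left A
  rw [hc] at hsum
  have hseries : HasSum (fun i : ℕ => iteratedDeriv i (fun s => A * sin (ω * s)) t *
      x ^ (2 * i) / (d ^ i * (2 * i).factorial)) (A / 2 * exp c * sin (ω * t + c) +
        A / 2 * exp (-c) * sin (ω * t - c)) := by
    rw [show A / 2 * exp c * sin (ω * t + c) + A / 2 * exp (-c) * sin (ω * t - c) =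
      A * ((exp c * sin (ω * t + c) + exp (-c) * sin (ω * t - c)) / 2) by ring]
    refine hsum.congr_fun fun i => ?_
    rw [iteratedDeriv_const_mul_sin_const_mul, div_pow, mul_pow, pow_mul]
    field_simp
  exact ⟨hseries.summable.abs, hseries.tsum_eq⟩
end
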